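/- arXiv:1710.01493 — 4 statements merged into one kernel-verified Lean document; each statement's English description precedes it below -/
import Mathlib

section
/- Let Θ ∈ ℝ^{n×n} and let G* : ℝ^{n×n} → ℝ be continuously differentiable and strictly convex. Define g : (ℝ^n × ℝ^n) × (ℝ^n × ℝ^n) → ℝ by g(p, ν) = ⟨p, ν⟩ − G*(𝒜ᵀν − Θ), and d(p) = sup_ν g(p, ν). Assume that for every p ∈ S × S the supremum defining d(p) is attained, and that every maximizer ν of g(p, ·) satisfies 𝒜(∇G*(𝒜ᵀν − Θ)) = p. Then for every p̄ = (p̄_1, p̄_2) ∈ S × S, every maximizer ν̄ of g(p̄, ·), and every direction v ∈ T × T, the function t ↦ d(p̄ + t v) is differentiable at t = 0 with derivative ⟨ν̄, v⟩ = ⟨P_{T×T}(ν̄), v⟩. In particular the derivative does not depend on the choice of maximizer ν̄, and (P_T(ν̄_1), P_T(ν̄_2)) is the Euclidean gradient of d restricted to the submanifold S × S. -/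
open Finset

noncomputable section

/-- Euclidean inner product on vectors. -/
def vdot {n : ℕ} (x y : Fin n → ℝ) : ℝ := ∑ k, x k * y k

/-- Frobenius inner product on matrices (here matrices are `Fin n → Fin n → ℝ`). -/
def mdot {n : ℕ} (A B : Fin n → Fin n → ℝ) : ℝ := ∑ k, ∑ l, A k l * B k l

/-- Inner product on pairs: ⟨(a,b),(c,d)⟩ = ⟨a,c⟩ + ⟨b,d⟩. -/
def pdot {n : ℕ} (x y : (Fin n → ℝ) × (Fin n → ℝ)) : ℝ := vdot x.1 y.1 + vdot x.2 y.2

/-- The relative interior `S` of the probability simplex. -/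
def Spos (n : ℕ) : Set (Fin n → ℝ) := {p | (∀ k, 0 < p k) ∧ ∑ k, p k = 1}

/-- Orthogonal projection `P_T(x) = x - (1/n)⟨𝟙,x⟩𝟙` onto `T = {v : ⟨𝟙,v⟩ = 0}`. -/
def projT {n : ℕ} (x : Fin n → ℝ) : Fin n → ℝ :=
  fun k => x k - (∑ j, x j) / n

/-- The adjoint marginal map 𝒜ᵀ(ν₁,ν₂) = ν₁𝟙ᵀ + 𝟙ν₂ᵀ. -/
def ATmap {n : ℕ} (ν : (Fin n → ℝ) × (Fin n → ℝ)) : Fin n → Fin n → ℝ :=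
  fun k l => ν.1 k + ν.2 l

/-- The marginal map 𝒜(M) = (M𝟙, Mᵀ𝟙). -/
def Amap {n : ℕ} (M : Fin n → Fin n → ℝ) : (Fin n → ℝ) × (Fin n → ℝ) :=
  (fun k => ∑ l, M k l, fun l => ∑ k, M k l)

/-- The dual objective `g(p,ν) = ⟨p,ν⟩ − G*(𝒜ᵀν − Θ)`. -/
def dualg {n : ℕ} (Gstar : (Fin n → Fin n → ℝ) → ℝ) (Θ : Fin n → Fin n → ℝ)
    (p ν : (Fin n → ℝ) × (Fin n → ℝ)) : ℝ :=
  pdot p ν - Gstar (ATmap ν - Θ)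

/-- The (smoothed Wasserstein) value function `d(p) = sup_ν g(p,ν)`. -/
def dfun {n : ℕ} (Gstar : (Fin n → Fin n → ℝ) → ℝ) (Θ : Fin n → Fin n → ℝ)
    (p : (Fin n → ℝ) × (Fin n → ℝ)) : ℝ :=
  sSup (Set.range (dualg Gstar Θ p))
namespace Stmt4Aux

variable {n : ℕ}

lemma pdot_comm (x y : (Fin n → ℝ) × (Fin n → ℝ)) : pdot x y = pdot y x := by
  simp [pdot, vdot, mul_comm]

lemma pdot_add_right (p a b : (Fin n → ℝ) × (Fin n → ℝ)) :
    pdot p (a + b) = pdot p a + pdot p b := by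
  simp [pdot, vdot, mul_add, Finset.sum_add_distrib]; ring

lemma pdot_sub_right (p a b : (Fin n → ℝ) × (Fin n → ℝ)) :
    pdot p (a - b) = pdot p a - pdot p b := by
  simp [pdot, vdot, mul_sub, Finset.sum_sub_distrib]; ring

lemma pdot_smul_right (p a : (Fin n → ℝ) × (Fin n → ℝ)) (c : ℝ) :
    pdot p (c • a) = c * pdot p a := by
  simp only [pdot, vdot, Prod.smul_fst, Prod.smul_snd, Pi.smul_apply, smul_eq_mul,
    Finset.mul_sum, mul_add]
  congr 1 <;> exact Finset.sum_congr rfl fun _ _ => by ring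

lemma pdot_add_smul (p v ν : (Fin n → ℝ) × (Fin n → ℝ)) (t : ℝ) :
    pdot (p + t • v) ν = pdot p ν + t * pdot v ν := by
  rw [pdot_comm, pdot_add_right, pdot_smul_right, pdot_comm ν p, pdot_comm ν v]

lemma ATmap_add (a b : (Fin n → ℝ) × (Fin n → ℝ)) :
    ATmap (a + b) = ATmap a + ATmap b := by
  funext k l; simp [ATmap]; ring

lemma ATmap_combo (a b : (Fin n → ℝ) × (Fin n → ℝ)) (Θ : Fin n → Fin n → ℝ)
    (μ₁ μ₂ : ℝ) (h12 : μ₁ + μ₂ = 1) :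
    ATmap (μ₁ • a + μ₂ • b) - Θ = μ₁ • (ATmap a - Θ) + μ₂ • (ATmap b - Θ) := by
  funext k l
  simp only [ATmap, Prod.fst_add, Prod.snd_add, Pi.add_apply, Pi.sub_apply, Pi.smul_apply,
    Prod.smul_fst, Prod.smul_snd, smul_eq_mul]
  linear_combination Θ k l * h12

lemma g_combo (Gstar : (Fin n → Fin n → ℝ) → ℝ) (hG : ConvexOn ℝ Set.univ Gstar)
    (Θ : Fin n → Fin n → ℝ) (p a b : (Fin n → ℝ) × (Fin n → ℝ))
    (μ₁ μ₂ : ℝ) (h1 : 0 ≤ μ₁) (h2 : 0 ≤ μ₂) (h12 : μ₁ + μ₂ = 1) :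
    μ₁ * dualg Gstar Θ p a + μ₂ * dualg Gstar Θ p b ≤ dualg Gstar Θ p (μ₁ • a + μ₂ • b) := by
  have hp : pdot p (μ₁ • a + μ₂ • b) = μ₁ * pdot p a + μ₂ * pdot p b := by
    rw [pdot_add_right, pdot_smul_right, pdot_smul_right]
  have hA := ATmap_combo a b Θ μ₁ μ₂ h12
  have hGle := hG.2 (Set.mem_univ (ATmap a - Θ)) (Set.mem_univ (ATmap b - Θ)) h1 h2 h12
  simp only [dualg, hp, hA]
  simp only [smul_eq_mul] at hGle
  nlinarith [hGle]

lemma g_mid_strict (Gstar : (Fin n → Fin n → ℝ) → ℝ) (hG : StrictConvexOn ℝ Set.univ Gstar)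
    (Θ : Fin n → Fin n → ℝ) (p a b : (Fin n → ℝ) × (Fin n → ℝ))
    (hne : ATmap a ≠ ATmap b) :
    (1/2 : ℝ) * dualg Gstar Θ p a + (1/2 : ℝ) * dualg Gstar Θ p b
      < dualg Gstar Θ p ((1/2 : ℝ) • a + (1/2 : ℝ) • b) := by
  have hp : pdot p ((1/2 : ℝ) • a + (1/2 : ℝ) • b)
      = (1/2 : ℝ) * pdot p a + (1/2 : ℝ) * pdot p b := by
    rw [pdot_add_right, pdot_smul_right, pdot_smul_right]
  have hA := ATmap_combo a b Θ (1/2) (1/2) (by norm_num)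
  have hne' : ATmap a - Θ ≠ ATmap b - Θ := by
    intro h; exact hne (by funext k l; have := congrFun (congrFun h k) l; simpa using this)
  have hGlt := hG.2 (Set.mem_univ (ATmap a - Θ)) (Set.mem_univ (ATmap b - Θ)) hne'
    (by norm_num : (0:ℝ) < 1/2) (by norm_num : (0:ℝ) < 1/2) (by norm_num)
  simp only [dualg, hp, hA, smul_eq_mul] at *
  nlinarith [hGlt]

/-- All maximizers of `g(p,·)` have the same `ATmap` value. -/
lemma ATmap_eq_of_max (Gstar : (Fin n → Fin n → ℝ) → ℝ)
    (hG : StrictConvexOn ℝ Set.univ Gstar) (Θ : Fin n → Fin n → ℝ)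
    (p a b : (Fin n → ℝ) × (Fin n → ℝ))
    (ha : ∀ ν', dualg Gstar Θ p ν' ≤ dualg Gstar Θ p a)
    (hb : ∀ ν', dualg Gstar Θ p ν' ≤ dualg Gstar Θ p b) :
    ATmap a = ATmap b := by
  by_contra hne
  have h1 := g_mid_strict Gstar hG Θ p a b hne
  have h2 := ha ((1/2 : ℝ) • a + (1/2 : ℝ) • b)
  have h3 := hb a
  have h4 := ha b
  linarith

/-- Kernel of `ATmap` intersected with the normalization `∑ u₁ = 0` is trivial. -/
lemma kernel_trivial (hn : 0 < n) (u : (Fin n → ℝ) × (Fin n → ℝ))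
    (hker : ATmap u = 0) (hsum : ∑ k, u.1 k = 0) : u = 0 := by
  have h : ∀ k l, u.1 k + u.2 l = 0 := fun k l => congrFun (congrFun hker k) l
  have i0 : Fin n := ⟨0, hn⟩
  have hconst : ∀ k, u.1 k = u.1 i0 := by
    intro k; have h1 := h k i0; have h2 := h i0 i0; linarith
  have hsum' : (n : ℝ) * u.1 i0 = 0 := by
    calc (n : ℝ) * u.1 i0 = ∑ _k : Fin n, u.1 i0 := by
          simp [Finset.sum_const, Finset.card_univ, mul_comm]
      _ = ∑ k, u.1 k := Finset.sum_congr rfl fun k _ => (hconst k).symm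
      _ = 0 := hsum
  have hz : u.1 i0 = 0 := by
    have hne : (n : ℝ) ≠ 0 := Nat.cast_ne_zero.mpr hn.ne'
    exact (mul_eq_zero.mp hsum').resolve_left hne
  have h1 : u.1 = 0 := by funext k; rw [hconst k, hz]; simp
  have h2 : u.2 = 0 := by
    funext l; simp only [Pi.zero_apply]; have := h i0 l; linarith [hz]
  exact Prod.ext h1 h2

/-- The kernel direction: shift first coordinate by `c`, second by `-c`. -/
def shiftE (n : ℕ) (c : ℝ) : (Fin n → ℝ) × (Fin n → ℝ) := (fun _ => c, fun _ => -c)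

lemma ATmap_shift (ν : (Fin n → ℝ) × (Fin n → ℝ)) (c : ℝ) :
    ATmap (ν + shiftE n c) = ATmap ν := by
  funext k l; simp [ATmap, shiftE]; ring

lemma pdot_shift (p ν : (Fin n → ℝ) × (Fin n → ℝ)) (c : ℝ)
    (hps : ∑ k, p.1 k = ∑ k, p.2 k) :
    pdot p (ν + shiftE n c) = pdot p ν := by
  simp only [pdot, vdot, shiftE, Prod.fst_add, Prod.snd_add, Pi.add_apply, mul_add,
    Finset.sum_add_distrib, mul_neg, Finset.sum_neg_distrib, ← Finset.sum_mul]
  rw [hps]; ring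

lemma dualg_shift (Gstar : (Fin n → Fin n → ℝ) → ℝ) (Θ : Fin n → Fin n → ℝ)
    (p ν : (Fin n → ℝ) × (Fin n → ℝ)) (c : ℝ) (hps : ∑ k, p.1 k = ∑ k, p.2 k) :
    dualg Gstar Θ p (ν + shiftE n c) = dualg Gstar Θ p ν := by
  simp [dualg, ATmap_shift, pdot_shift p ν c hps]

lemma sum_shift (ν : (Fin n → ℝ) × (Fin n → ℝ)) (c : ℝ) :
    ∑ k, (ν + shiftE n c).1 k = (∑ k, ν.1 k) + n * c := by
  simp [shiftE, Finset.sum_add_distrib, Finset.card_univ, mul_comm]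

/-- Bound `|pdot v w| ≤ Cv * ‖w‖` with `Cv = ∑|v₁| + ∑|v₂|`. -/
lemma pdot_bound (v w : (Fin n → ℝ) × (Fin n → ℝ)) :
    |pdot v w| ≤ ((∑ k, |v.1 k|) + ∑ k, |v.2 k|) * ‖w‖ := by
  have key : ∀ (x y : Fin n → ℝ), (∀ k, |y k| ≤ ‖w‖) → |vdot x y| ≤ (∑ k, |x k|) * ‖w‖ := by
    intro x y hy
    calc |vdot x y| ≤ ∑ k, |x k * y k| := Finset.abs_sum_le_sum_abs _ _
      _ ≤ ∑ k, |x k| * ‖w‖ := Finset.sum_le_sum fun k _ => by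
            rw [abs_mul]; exact mul_le_mul_of_nonneg_left (hy k) (abs_nonneg _)
      _ = (∑ k, |x k|) * ‖w‖ := by rw [Finset.sum_mul]
  have h1 : ∀ k, |w.1 k| ≤ ‖w‖ := fun k => by
    have := (norm_le_pi_norm w.1 k).trans (norm_fst_le w); simpa using this
  have h2 : ∀ k, |w.2 k| ≤ ‖w‖ := fun k => by
    have := (norm_le_pi_norm w.2 k).trans (norm_snd_le w); simpa using this
  calc |pdot v w| ≤ |vdot v.1 w.1| + |vdot v.2 w.2| := abs_add_le _ _
    _ ≤ (∑ k, |v.1 k|) * ‖w‖ + (∑ k, |v.2 k|) * ‖w‖ :=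
        add_le_add (key v.1 w.1 h1) (key v.2 w.2 h2)
    _ = _ := by ring

/-- The sup is the value at any maximizer. -/
lemma dfun_eq (Gstar : (Fin n → Fin n → ℝ) → ℝ) (Θ : Fin n → Fin n → ℝ)
    (p ν : (Fin n → ℝ) × (Fin n → ℝ))
    (hmax : ∀ ν', dualg Gstar Θ p ν' ≤ dualg Gstar Θ p ν) :
    dfun Gstar Θ p = dualg Gstar Θ p ν := by
  apply le_antisymm
  · exact csSup_le (Set.range_nonempty _) (by rintro x ⟨ν', rfl⟩; exact hmax ν')
  · exact le_csSup ⟨dualg Gstar Θ p ν, by rintro x ⟨ν', rfl⟩; exact hmax ν'⟩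
      (Set.mem_range_self ν)

lemma vdot_projT (x w : Fin n → ℝ) (hw : ∑ k, w k = 0) :
    vdot (projT x) w = vdot x w := by
  simp only [vdot, projT, sub_mul, Finset.sum_sub_distrib, ← Finset.mul_sum, hw]
  ring

lemma dualg_linear (Gstar : (Fin n → Fin n → ℝ) → ℝ) (Θ : Fin n → Fin n → ℝ)
    (p v w : (Fin n → ℝ) × (Fin n → ℝ)) (t : ℝ) :
    dualg Gstar Θ (p + t • v) w = dualg Gstar Θ p w + t * pdot v w := by
  simp [dualg, pdot_add_smul]; ring

lemma pdot_cont (p : (Fin n → ℝ) × (Fin n → ℝ)) :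
    Continuous fun w : (Fin n → ℝ) × (Fin n → ℝ) => pdot p w := by
  unfold pdot vdot
  exact (continuous_finset_sum _ fun k _ =>
      continuous_const.mul ((continuous_apply k).comp continuous_fst)).add
    (continuous_finset_sum _ fun k _ =>
      continuous_const.mul ((continuous_apply k).comp continuous_snd))

lemma dualg_cont (Gstar : (Fin n → Fin n → ℝ) → ℝ) (hGc : Continuous Gstar)
    (Θ : Fin n → Fin n → ℝ) (p : (Fin n → ℝ) × (Fin n → ℝ)) :
    Continuous fun w : (Fin n → ℝ) × (Fin n → ℝ) => dualg Gstar Θ p w := by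
  apply (pdot_cont p).sub
  apply hGc.comp
  apply Continuous.sub _ continuous_const
  exact continuous_pi fun k => continuous_pi fun l =>
    ((continuous_apply k).comp continuous_fst).add ((continuous_apply l).comp continuous_snd)

end Stmt4Aux

open Stmt4Aux

set_option maxHeartbeats 2000000

theorem stmt4 (n : ℕ) (Θ : Fin n → Fin n → ℝ)
    (Gstar : (Fin n → Fin n → ℝ) → ℝ)
    -- `G*` is continuously differentiable with gradient `Gd` and strictly convex:
    (Gd : (Fin n → Fin n → ℝ) → (Fin n → Fin n → ℝ))
    (hGdiff : ∀ X, ∃ L : (Fin n → Fin n → ℝ) →L[ℝ] ℝ,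
      HasFDerivAt Gstar L X ∧ ∀ Y, L Y = mdot (Gd X) Y)
    (hGcont : Continuous Gd)
    (hGconv : StrictConvexOn ℝ Set.univ Gstar)
    -- the supremum defining `d(p)` is attained for every p ∈ S × S:
    (hatt : ∀ p : (Fin n → ℝ) × (Fin n → ℝ), p.1 ∈ Spos n → p.2 ∈ Spos n →
      ∃ ν, ∀ ν', dualg Gstar Θ p ν' ≤ dualg Gstar Θ p ν)
    -- every maximizer ν of g(p,·) satisfies 𝒜(∇G*(𝒜ᵀν − Θ)) = p:
    (hmarg : ∀ p : (Fin n → ℝ) × (Fin n → ℝ), p.1 ∈ Spos n → p.2 ∈ Spos n →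
      ∀ ν, (∀ ν', dualg Gstar Θ p ν' ≤ dualg Gstar Θ p ν) → Amap (Gd (ATmap ν - Θ)) = p)
    (pbar : (Fin n → ℝ) × (Fin n → ℝ)) (hp1 : pbar.1 ∈ Spos n) (hp2 : pbar.2 ∈ Spos n)
    (νbar : (Fin n → ℝ) × (Fin n → ℝ))
    (hνbar : ∀ ν', dualg Gstar Θ pbar ν' ≤ dualg Gstar Θ pbar νbar)
    -- direction v ∈ T × T:
    (v : (Fin n → ℝ) × (Fin n → ℝ)) (hv1 : ∑ k, v.1 k = 0) (hv2 : ∑ k, v.2 k = 0) :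
    HasDerivAt (fun t : ℝ => dfun Gstar Θ (pbar + t • v)) (pdot νbar v) 0 ∧
    pdot νbar v = pdot (projT νbar.1, projT νbar.2) v := by
  classical
  obtain ⟨hp1pos, hp1sum⟩ := hp1
  obtain ⟨hp2pos, hp2sum⟩ := hp2
  -- easy part: the projection identity
  have hproj : pdot νbar v = pdot (projT νbar.1, projT νbar.2) v := by
    have : pdot (projT νbar.1, projT νbar.2) v = pdot νbar v := by
      simp only [pdot]
      rw [vdot_projT _ _ hv1, vdot_projT _ _ hv2]
    exact this.symm
  refine ⟨?_, hproj⟩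
  -- basic facts
  have hn : 0 < n := by
    rcases Nat.eq_zero_or_pos n with h | h
    · subst h; simp at hp1sum
    · exact h
  have hnR : (n : ℝ) ≠ 0 := Nat.cast_ne_zero.mpr hn.ne'
  haveI : Nonempty (Fin n) := ⟨⟨0, hn⟩⟩
  have hGc : Continuous Gstar :=
    continuous_iff_continuousAt.mpr fun X => (hGdiff X).choose_spec.1.continuousAt
  have hvv : ∑ k, v.1 k = ∑ k, v.2 k := by rw [hv1, hv2]
  have hps : ∑ k, pbar.1 k = ∑ k, pbar.2 k := by rw [hp1sum, hp2sum]
  -- normalized maximizer at pbar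
  set νhat : (Fin n → ℝ) × (Fin n → ℝ) := νbar + shiftE n (-(∑ k, νbar.1 k) / n) with hνhat
  have hhatmax : ∀ ν', dualg Gstar Θ pbar ν' ≤ dualg Gstar Θ pbar νhat := fun ν' =>
    (hνbar ν').trans_eq (dualg_shift Gstar Θ pbar νbar _ hps).symm
  have hhatsum : ∑ k, νhat.1 k = 0 := by
    rw [hνhat, sum_shift]; field_simp; ring
  have hcv : pdot v νhat = pdot νbar v := by
    rw [hνhat, pdot_shift v νbar _ hvv, pdot_comm]
  set φ0 : ℝ := dualg Gstar Θ pbar νhat with hφ0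
  have hd0 : dfun Gstar Θ pbar = φ0 := dfun_eq Gstar Θ pbar νhat hhatmax
  rw [hasDerivAt_iff_isLittleO, Asymptotics.isLittleO_iff]
  intro ε hε
  -- constants
  set Cv : ℝ := (∑ k, |v.1 k|) + ∑ k, |v.2 k| with hCvdef
  have hCv0 : 0 ≤ Cv := by positivity
  set r : ℝ := min 1 (ε / (Cv + 1)) with hrdef
  have hr0 : 0 < r := lt_min one_pos (by positivity)
  have hrCv : Cv * r ≤ ε := by
    have hr2 : r ≤ ε / (Cv + 1) := min_le_right _ _
    calc Cv * r ≤ (Cv + 1) * r := by nlinarith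
      _ ≤ (Cv + 1) * (ε / (Cv + 1)) := mul_le_mul_of_nonneg_left hr2 (by positivity)
      _ = ε := by field_simp
  have hvb1 : ∀ k, |v.1 k| ≤ Cv := by
    intro k
    have h1 : |v.1 k| ≤ ∑ j, |v.1 j| :=
      Finset.single_le_sum (f := fun j => |v.1 j|) (fun j _ => abs_nonneg _) (Finset.mem_univ k)
    have h2 : (0:ℝ) ≤ ∑ j, |v.2 j| := by positivity
    rw [hCvdef]; linarith
  have hvb2 : ∀ k, |v.2 k| ≤ Cv := by
    intro k
    have h1 : |v.2 k| ≤ ∑ j, |v.2 j| :=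
      Finset.single_le_sum (f := fun j => |v.2 j|) (fun j _ => abs_nonneg _) (Finset.mem_univ k)
    have h2 : (0:ℝ) ≤ ∑ j, |v.1 j| := by positivity
    rw [hCvdef]; linarith
  -- positivity margin
  obtain ⟨δ₁, hδ₁pos, hδ₁⟩ : ∃ δ₁ > 0, ∀ t : ℝ, |t| ≤ δ₁ →
      ((pbar + t • v).1 ∈ Spos n ∧ (pbar + t • v).2 ∈ Spos n) := by
    have hne : (Finset.univ : Finset (Fin n)).Nonempty := Finset.univ_nonempty
    set m1 : ℝ := Finset.univ.inf' hne pbar.1 with hm1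
    set m2 : ℝ := Finset.univ.inf' hne pbar.2 with hm2
    have hm1p : 0 < m1 := (Finset.lt_inf'_iff hne).mpr fun k _ => hp1pos k
    have hm2p : 0 < m2 := (Finset.lt_inf'_iff hne).mpr fun k _ => hp2pos k
    set m : ℝ := min m1 m2 with hm
    have hmp : 0 < m := lt_min hm1p hm2p
    refine ⟨m / (2 * (Cv + 1)), by positivity, ?_⟩
    intro t ht
    have htc : |t| * Cv ≤ m / 2 := by
      calc |t| * Cv ≤ (m / (2 * (Cv + 1))) * Cv :=
            mul_le_mul_of_nonneg_right ht hCv0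
        _ ≤ m / 2 := by rw [div_mul_eq_mul_div, div_le_div_iff₀ (by positivity) (by norm_num)]
                        nlinarith
    have hb : ∀ (w : Fin n → ℝ) (k : Fin n), |w k| ≤ Cv → |t * w k| ≤ m / 2 := by
      intro w k hw
      rw [abs_mul]
      calc |t| * |w k| ≤ |t| * Cv := mul_le_mul_of_nonneg_left hw (abs_nonneg _)
        _ ≤ m / 2 := htc
    have happ1 : ∀ k, (pbar + t • v).1 k = pbar.1 k + t * v.1 k := fun k => rfl
    have happ2 : ∀ k, (pbar + t • v).2 k = pbar.2 k + t * v.2 k := fun k => rfl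
    constructor
    · constructor
      · intro k
        rw [happ1 k]
        have := hb v.1 k (hvb1 k)
        have hm1k : m1 ≤ pbar.1 k := Finset.inf'_le _ (Finset.mem_univ k)
        have : -(m/2) ≤ t * v.1 k := (abs_le.mp this).1
        have hmm : m ≤ m1 := min_le_left _ _
        linarith
      · rw [show ∑ k, (pbar + t • v).1 k = ∑ k, (pbar.1 k + t * v.1 k) from
          Finset.sum_congr rfl fun k _ => happ1 k]
        rw [Finset.sum_add_distrib, ← Finset.mul_sum, hv1, hp1sum]; ring
    · constructor
      · intro k
        rw [happ2 k]
        have := hb v.2 k (hvb2 k)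
        have hm2k : m2 ≤ pbar.2 k := Finset.inf'_le _ (Finset.mem_univ k)
        have : -(m/2) ≤ t * v.2 k := (abs_le.mp this).1
        have hmm : m ≤ m2 := min_le_right _ _
        linarith
      · rw [show ∑ k, (pbar + t • v).2 k = ∑ k, (pbar.2 k + t * v.2 k) from
          Finset.sum_congr rfl fun k _ => happ2 k]
        rw [Finset.sum_add_distrib, ← Finset.mul_sum, hv2, hp2sum]; ring
  -- compact sphere in the normalized subspace, and the gap η
  set K : Set ((Fin n → ℝ) × (Fin n → ℝ)) := {u | ‖u‖ = r ∧ ∑ k, u.1 k = 0} with hK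
  have hKclosed : IsClosed K := by
    apply IsClosed.inter
    · exact isClosed_eq continuous_norm continuous_const
    · exact isClosed_eq (continuous_finset_sum _ fun k _ =>
        (continuous_apply k).comp continuous_fst) continuous_const
  have hKbdd : Bornology.IsBounded K :=
    (Metric.isBounded_closedBall (x := (0 : (Fin n → ℝ) × (Fin n → ℝ))) (r := r)).subset
      (fun u hu => by simp only [Metric.mem_closedBall, dist_zero_right]; exact le_of_eq hu.1)
  have hKcomp : IsCompact K := Metric.isCompact_of_isClosed_isBounded hKclosed hKbdd
  have hKne : K.Nonempty := by
    refine ⟨((fun _ => 0), (fun _ => r)), ?_, by simp⟩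
    have h1 : ‖((fun _ => 0 : Fin n → ℝ), (fun _ => r : Fin n → ℝ))‖
        = max ‖(fun _ => (0:ℝ) : Fin n → ℝ)‖ ‖(fun _ => r : Fin n → ℝ)‖ := rfl
    rw [h1, pi_norm_const, pi_norm_const]
    simp [Real.norm_eq_abs, abs_of_pos hr0, le_of_lt hr0]
  have hFcont : ContinuousOn (fun u => dualg Gstar Θ pbar (νhat + u)) K :=
    ((dualg_cont Gstar hGc Θ pbar).comp (continuous_const.add continuous_id)).continuousOn
  obtain ⟨u₀, hu₀K, hu₀max⟩ := hKcomp.exists_isMaxOn hKne hFcont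
  have hgap : dualg Gstar Θ pbar (νhat + u₀) < φ0 := by
    rcases lt_or_ge (dualg Gstar Θ pbar (νhat + u₀)) φ0 with h | h
    · exact h
    · exfalso
      have hmax' : ∀ ν', dualg Gstar Θ pbar ν' ≤ dualg Gstar Θ pbar (νhat + u₀) :=
        fun ν' => (hhatmax ν').trans h
      have hAT : ATmap (νhat + u₀) = ATmap νhat :=
        ATmap_eq_of_max Gstar hGconv Θ pbar _ _ hmax' hhatmax
      rw [ATmap_add] at hAT
      have hker : ATmap u₀ = 0 := by
        have := hAT
        rwa [add_eq_left] at this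
      have hu0 : u₀ = 0 := kernel_trivial hn u₀ hker hu₀K.2
      rw [hu0] at hu₀K
      have : ‖(0 : (Fin n → ℝ) × (Fin n → ℝ))‖ = r := hu₀K.1
      rw [norm_zero] at this
      exact hr0.ne this
  set η : ℝ := φ0 - dualg Gstar Θ pbar (νhat + u₀) with hη
  have hηpos : 0 < η := by rw [hη]; linarith
  have hKlt : ∀ u ∈ K, dualg Gstar Θ pbar (νhat + u) ≤ φ0 - η := by
    intro u hu
    have := hu₀max hu
    simp only [Set.mem_setOf_eq] at this
    rw [hη]; linarith [this]
  -- the second smallness threshold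
  obtain ⟨B, hB⟩ : ∃ B : ℝ, B = Cv * (2 * ‖νhat‖ + r) + 1 := ⟨_, rfl⟩
  have hBpos : 0 < B := by
    have h0 : (0:ℝ) ≤ 2 * ‖νhat‖ + r := by linarith [norm_nonneg νhat, hr0.le]
    have : 0 ≤ Cv * (2 * ‖νhat‖ + r) := mul_nonneg hCv0 h0
    rw [hB]; linarith
  obtain ⟨δ₂, hδ₂⟩ : ∃ d : ℝ, d = η / (2 * B) := ⟨_, rfl⟩
  have hδ₂pos : 0 < δ₂ := hδ₂ ▸ div_pos hηpos (by linarith)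
  -- key strict comparison on the sphere for small t
  have hsphere : ∀ t : ℝ, |t| ≤ δ₂ → ∀ u ∈ K,
      dualg Gstar Θ (pbar + t • v) (νhat + u) < dualg Gstar Θ (pbar + t • v) νhat := by
    intro t ht u hu
    have h1 : dualg Gstar Θ (pbar + t • v) (νhat + u)
        = dualg Gstar Θ pbar (νhat + u) + t * pdot v (νhat + u) :=
      dualg_linear Gstar Θ pbar v (νhat + u) t
    have h2 : dualg Gstar Θ (pbar + t • v) νhat
        = φ0 + t * pdot v νhat := dualg_linear Gstar Θ pbar v νhat t
    have hb1 : |pdot v (νhat + u)| ≤ Cv * (‖νhat‖ + r) := by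
      have := pdot_bound v (νhat + u)
      have hnorm : ‖νhat + u‖ ≤ ‖νhat‖ + r := by
        calc ‖νhat + u‖ ≤ ‖νhat‖ + ‖u‖ := norm_add_le _ _
          _ = ‖νhat‖ + r := by rw [hu.1]
      calc |pdot v (νhat + u)| ≤ Cv * ‖νhat + u‖ := this
        _ ≤ Cv * (‖νhat‖ + r) := mul_le_mul_of_nonneg_left hnorm hCv0
    have hb2 : |pdot v νhat| ≤ Cv * ‖νhat‖ := pdot_bound v νhat
    have hKu := hKlt u hu
    have habs1 : |t * pdot v (νhat + u)| ≤ δ₂ * (Cv * (‖νhat‖ + r)) := by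
      rw [abs_mul]
      exact mul_le_mul ht hb1 (abs_nonneg _) (le_of_lt hδ₂pos)
    have habs2 : |t * pdot v νhat| ≤ δ₂ * (Cv * ‖νhat‖) := by
      rw [abs_mul]
      exact mul_le_mul ht hb2 (abs_nonneg _) (le_of_lt hδ₂pos)
    have hδB : δ₂ * B ≤ η / 2 := by
      have hBne : B ≠ 0 := ne_of_gt hBpos
      have : δ₂ * B = η / 2 := by rw [hδ₂]; field_simp
      exact this.le
    have hνn : 0 ≤ ‖νhat‖ := norm_nonneg _
    have e1 := (abs_le.mp habs1).2
    have e1' := (abs_le.mp habs1).1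
    have e2 := (abs_le.mp habs2).1
    rw [h1, h2]
    have hBsplit : δ₂ * (Cv * (‖νhat‖ + r)) + δ₂ * (Cv * ‖νhat‖) ≤ δ₂ * B := by
      rw [hB]; nlinarith [hδ₂pos.le]
    nlinarith
  -- every normalized maximizer for small t lies within distance r of νhat
  set δ : ℝ := min δ₁ δ₂ with hδ
  have hδpos : 0 < δ := lt_min hδ₁pos hδ₂pos
  have hball : ∀ t : ℝ, |t| ≤ δ → ∀ ν', (∀ w, dualg Gstar Θ (pbar + t • v) w ≤
      dualg Gstar Θ (pbar + t • v) ν') → (∑ k, ν'.1 k = 0) → ‖ν' - νhat‖ < r := by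
    intro t ht ν' hν'max hν'sum
    by_contra hcon
    push_neg at hcon
    set s : ℝ := ‖ν' - νhat‖ with hs
    have hspos : 0 < s := lt_of_lt_of_le hr0 hcon
    set lam : ℝ := r / s with hlam
    have hlam0 : 0 < lam := div_pos hr0 hspos
    have hlam1 : lam ≤ 1 := (div_le_one hspos).mpr hcon
    set u : (Fin n → ℝ) × (Fin n → ℝ) := lam • (ν' - νhat) with hu
    have hunorm : ‖u‖ = r := by
      rw [hu, norm_smul, Real.norm_eq_abs, abs_of_pos hlam0, ← hs, hlam]
      field_simp
    have husum : ∑ k, u.1 k = 0 := by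
      have : ∀ k, u.1 k = lam * (ν'.1 k - νhat.1 k) := fun k => rfl
      rw [Finset.sum_congr rfl fun k _ => this k, ← Finset.mul_sum,
        Finset.sum_sub_distrib, hν'sum, hhatsum]
      ring
    have huK : u ∈ K := ⟨hunorm, husum⟩
    have hcombo : νhat + u = (1 - lam) • νhat + lam • ν' := by
      rw [hu, smul_sub, sub_smul, one_smul]; abel
    have hconc := g_combo Gstar hGconv.convexOn Θ (pbar + t • v) νhat ν'
      (1 - lam) lam (by linarith) (le_of_lt hlam0) (by ring)
    rw [← hcombo] at hconc
    have hge : dualg Gstar Θ (pbar + t • v) νhat ≤ dualg Gstar Θ (pbar + t • v) ν' :=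
      hν'max νhat
    have hlt := hsphere t (le_trans ht (min_le_right _ _)) u huK
    nlinarith
  -- final estimate
  filter_upwards [Metric.closedBall_mem_nhds (0:ℝ) hδpos] with t ht
  rw [Metric.mem_closedBall, Real.dist_eq, sub_zero] at ht
  have htδ₁ : |t| ≤ δ₁ := le_trans ht (min_le_left _ _)
  obtain ⟨hpt1, hpt2⟩ := hδ₁ t htδ₁
  obtain ⟨ν₀, hν₀⟩ := hatt (pbar + t • v) hpt1 hpt2
  have hptsum : ∑ k, (pbar + t • v).1 k = ∑ k, (pbar + t • v).2 k := by
    rw [hpt1.2, hpt2.2]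
  obtain ⟨νt, hνtdef⟩ : ∃ w : (Fin n → ℝ) × (Fin n → ℝ),
      w = ν₀ + shiftE n (-(∑ k, ν₀.1 k) / n) := ⟨_, rfl⟩
  have hνtmax : ∀ ν', dualg Gstar Θ (pbar + t • v) ν'
      ≤ dualg Gstar Θ (pbar + t • v) νt := by
    intro ν'
    rw [hνtdef, dualg_shift Gstar Θ _ ν₀ _ hptsum]
    exact hν₀ ν'
  have hνtsum : ∑ k, νt.1 k = 0 := by
    rw [hνtdef, sum_shift]; field_simp; ring
  have hdist : ‖νt - νhat‖ < r := hball t ht νt (fun w => hνtmax w) hνtsum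
  have hft : dfun Gstar Θ (pbar + t • v) = dualg Gstar Θ (pbar + t • v) νt :=
    dfun_eq _ _ _ _ hνtmax
  have h1 : dualg Gstar Θ (pbar + t • v) νt = dualg Gstar Θ pbar νt + t * pdot v νt :=
    dualg_linear Gstar Θ pbar v νt t
  have h2 : dualg Gstar Θ pbar νt ≤ φ0 := hhatmax νt
  have h3 : pdot v (νt - νhat) = pdot v νt - pdot v νhat := pdot_sub_right v νt νhat
  have h4 : |pdot v (νt - νhat)| ≤ Cv * r := by
    calc |pdot v (νt - νhat)| ≤ Cv * ‖νt - νhat‖ := pdot_bound v (νt - νhat)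
      _ ≤ Cv * r := mul_le_mul_of_nonneg_left hdist.le hCv0
  have h5 : t * pdot v (νt - νhat) ≤ |t| * (Cv * r) := by
    calc t * pdot v (νt - νhat) ≤ |t * pdot v (νt - νhat)| := le_abs_self _
      _ = |t| * |pdot v (νt - νhat)| := abs_mul _ _
      _ ≤ |t| * (Cv * r) := mul_le_mul_of_nonneg_left h4 (abs_nonneg t)
  have h6 : |t| * (Cv * r) ≤ ε * |t| := by
    rw [mul_comm]; exact mul_le_mul_of_nonneg_right hrCv (abs_nonneg t)
  have hup : dualg Gstar Θ (pbar + t • v) νt ≤ φ0 + t * pdot νbar v + ε * |t| := by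
    rw [h1, ← hcv]
    have h3' : t * pdot v νt - t * pdot v νhat = t * pdot v (νt - νhat) := by
      rw [h3]; ring
    linarith
  have hlo : φ0 + t * pdot νbar v ≤ dualg Gstar Θ (pbar + t • v) νt := by
    have hl1 := hνtmax νhat
    have hl2 : dualg Gstar Θ (pbar + t • v) νhat = φ0 + t * pdot v νhat :=
      dualg_linear Gstar Θ pbar v νhat t
    rw [hcv] at hl2
    linarith
  have hzero : pbar + (0:ℝ) • v = pbar := by rw [zero_smul, add_zero]
  simp only [hzero, sub_zero, smul_eq_mul, Real.norm_eq_abs]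
  rw [hft, hd0, abs_le]
  have habsnn : (0:ℝ) ≤ ε * |t| := mul_nonneg hε.le (abs_nonneg t)
  constructor
  · linarith
  · linarith
end
end

section
/- Let Θ ∈ ℝ^{n×n}, let G* : ℝ^{n×n} → ℝ be continuously differentiable and strictly convex, and let p ∈ ℝ^n × ℝ^n have strictly positive entries. Define g(p, ν) = ⟨p, ν⟩ − G*(𝒜ᵀν − Θ) for ν ∈ ℝ^n × ℝ^n. Assume the set of maximizers argmax_ν g(p, ν) is nonempty, with element ν̄, and that every maximizer ν satisfies 𝒜(∇G*(𝒜ᵀν − Θ)) = p. Then: if ⟨p, (𝟙, −𝟙)⟩ ≠ 0, the set of maximizers equals the singleton {ν̄}; and if ⟨p, (𝟙, −𝟙)⟩ = 0, the set of maximizers equals the affine set ν̄ + ker(𝒜ᵀ) = {ν̄ + λ(𝟙, −𝟙) : λ ∈ ℝ}. -/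
open Finset

noncomputable section

theorem stmt7 (n : ℕ) (Θ : Fin n → Fin n → ℝ)
    (Gstar : (Fin n → Fin n → ℝ) → ℝ)
    -- `G*` is continuously differentiable with gradient `Gd` and strictly convex:
    (Gd : (Fin n → Fin n → ℝ) → (Fin n → Fin n → ℝ))
    (hGdiff : ∀ X, ∃ L : (Fin n → Fin n → ℝ) →L[ℝ] ℝ,
      HasFDerivAt Gstar L X ∧ ∀ Y, L Y = mdot (Gd X) Y)
    (hGcont : Continuous Gd)
    (hGconv : StrictConvexOn ℝ Set.univ Gstar)
    -- `p` has strictly positive entries: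
    (p : (Fin n → ℝ) × (Fin n → ℝ)) (hp1 : ∀ k, 0 < p.1 k) (hp2 : ∀ k, 0 < p.2 k)
    -- the set of maximizers is nonempty, with element ν̄:
    (νbar : (Fin n → ℝ) × (Fin n → ℝ))
    (hνbar : ∀ ν, dualg Gstar Θ p ν ≤ dualg Gstar Θ p νbar)
    -- every maximizer ν satisfies 𝒜(∇G*(𝒜ᵀν − Θ)) = p:
    (hmarg : ∀ ν, (∀ ν', dualg Gstar Θ p ν' ≤ dualg Gstar Θ p ν) →
      Amap (Gd (ATmap ν - Θ)) = p) :
    -- if ⟨p,(𝟙,−𝟙)⟩ ≠ 0, the maximizer is unique: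
    (pdot p ((fun _ => 1), fun _ => -1) ≠ 0 →
      {ν | ∀ ν', dualg Gstar Θ p ν' ≤ dualg Gstar Θ p ν} = {νbar}) ∧
    -- if ⟨p,(𝟙,−𝟙)⟩ = 0, the maximizers form the affine set ν̄ + ker(𝒜ᵀ):
    (pdot p ((fun _ => 1), fun _ => -1) = 0 →
      {ν | ∀ ν', dualg Gstar Θ p ν' ≤ dualg Gstar Θ p ν} =
        {ν | ∃ c : ℝ, ν = νbar + ((fun _ => c), fun _ => -c)}) := by

  classical
  have vdot_add : ∀ x y z : Fin n → ℝ, vdot x (y + z) = vdot x y + vdot x z := by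
    intro x y z; simp [vdot, mul_add, Finset.sum_add_distrib]
  have vdot_smul : ∀ (c : ℝ) (x y : Fin n → ℝ), vdot x (c • y) = c * vdot x y := by
    intro c x y; simp [vdot, Finset.mul_sum, mul_comm, mul_left_comm]
  have pdot_add : ∀ x y : (Fin n → ℝ) × (Fin n → ℝ), pdot p (x + y) = pdot p x + pdot p y := by
    intro x y; simp only [pdot, Prod.fst_add, Prod.snd_add, vdot_add]; ring
  have pdot_smul : ∀ (c : ℝ) (x : (Fin n → ℝ) × (Fin n → ℝ)), pdot p (c • x) = c * pdot p x := by
    intro c x; simp only [pdot, Prod.smul_fst, Prod.smul_snd, vdot_smul]; ring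
  -- inner product against the shifted vector
  have pdot_shift : ∀ (ν : (Fin n → ℝ) × (Fin n → ℝ)) (c : ℝ),
      pdot p (ν + ((fun _ => c), fun _ => -c)) =
        pdot p ν + c * pdot p ((fun _ => 1), fun _ => -1) := by
    intro ν c
    rw [pdot_add, show (((fun _ => c), fun _ => -c) : (Fin n → ℝ) × (Fin n → ℝ)) =
      c • (((fun _ => 1), fun _ => -1) : (Fin n → ℝ) × (Fin n → ℝ)) from by
        ext k <;> simp, pdot_smul]
  have AT_shift : ∀ (ν : (Fin n → ℝ) × (Fin n → ℝ)) (c : ℝ),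
      ATmap (ν + ((fun _ => c), fun _ => -c)) = ATmap ν := by
    intro ν c; funext k l
    simp only [ATmap, Prod.fst_add, Prod.snd_add, Pi.add_apply]; ring
  have dualg_shift : ∀ (ν : (Fin n → ℝ) × (Fin n → ℝ)) (c : ℝ),
      dualg Gstar Θ p (ν + ((fun _ => c), fun _ => -c)) =
        dualg Gstar Θ p ν + c * pdot p ((fun _ => 1), fun _ => -1) := by
    intro ν c
    simp [dualg, pdot_shift, AT_shift]; ring
  -- key: every maximizer has the same ATmap as νbar
  have key : ∀ ν, (∀ ν', dualg Gstar Θ p ν' ≤ dualg Gstar Θ p ν) →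
      ATmap ν = ATmap νbar := by
    intro ν hν
    by_contra hne
    have hXY : ATmap ν - Θ ≠ ATmap νbar - Θ := fun h => hne (by
      have := congrArg (· + Θ) h
      simpa using this)
    set μ := (1/2 : ℝ) • ν + (1/2 : ℝ) • νbar with hμ
    have h1 : ATmap μ - Θ =
        (1/2 : ℝ) • (ATmap ν - Θ) + (1/2 : ℝ) • (ATmap νbar - Θ) := by
      funext k l
      simp [ATmap, hμ, Pi.smul_apply, smul_eq_mul]
      ring
    have h2 : pdot p μ = (1/2) * pdot p ν + (1/2) * pdot p νbar := by
      rw [hμ, pdot_add, pdot_smul, pdot_smul]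
    have hconv := hGconv.2 (Set.mem_univ (ATmap ν - Θ)) (Set.mem_univ (ATmap νbar - Θ))
      hXY (by norm_num : (0:ℝ) < 1/2) (by norm_num : (0:ℝ) < 1/2) (by norm_num)
    have heq : dualg Gstar Θ p ν = dualg Gstar Θ p νbar :=
      le_antisymm (hνbar ν) (hν νbar)
    have hlt : dualg Gstar Θ p νbar < dualg Gstar Θ p μ := by
      simp only [dualg, h1, h2]
      have : Gstar ((1/2 : ℝ) • (ATmap ν - Θ) + (1/2 : ℝ) • (ATmap νbar - Θ)) <
          (1/2) * Gstar (ATmap ν - Θ) + (1/2) * Gstar (ATmap νbar - Θ) := hconv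
      simp only [dualg] at heq
      linarith
    exact absurd (hνbar μ) (not_le.mpr hlt)
  -- from equal ATmap, extract the constant shift (n ≥ 1 case)
  have shape : ∀ ν, ATmap ν = ATmap νbar → ∀ i0 : Fin n,
      ν = νbar + ((fun _ => ν.1 i0 - νbar.1 i0), fun _ => -(ν.1 i0 - νbar.1 i0)) := by
    intro ν hAT i0
    have h : ∀ k l, ν.1 k + ν.2 l = νbar.1 k + νbar.2 l := fun k l =>
      congrFun (congrFun hAT k) l
    have hprod : ν = (ν.1, ν.2) := rfl
    rw [hprod]
    have h1 : ∀ k, ν.1 k = νbar.1 k + (ν.1 i0 - νbar.1 i0) := by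
      intro k
      have e1 := h k i0
      have e2 := h i0 i0
      linarith
    have h2 : ∀ l, ν.2 l = νbar.2 l + -(ν.1 i0 - νbar.1 i0) := by
      intro l
      have e1 := h i0 l
      linarith
    ext k
    · simpa using h1 k
    · simpa using h2 k
  constructor
  · -- first part
    intro hne0
    have hn : 0 < n := by
      rcases Nat.eq_zero_or_pos n with h | h
      · exfalso; apply hne0; subst h; simp [pdot, vdot]
      · exact h
    ext ν
    simp only [Set.mem_setOf_eq, Set.mem_singleton_iff]
    constructor
    · intro hν
      obtain ⟨c, hc⟩ : ∃ c : ℝ, ν = νbar + ((fun _ => c), fun _ => -c) :=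
        ⟨_, shape ν (key ν hν) ⟨0, hn⟩⟩
      have heq : dualg Gstar Θ p ν = dualg Gstar Θ p νbar :=
        le_antisymm (hνbar ν) (hν νbar)
      rw [hc, dualg_shift] at heq
      have hc0 : c = 0 := by
        by_contra h
        exact h (by
          have := mul_eq_zero.mp (by linarith : c * pdot p ((fun _ => 1), fun _ => -1) = 0)
          tauto)
      rw [hc, hc0]
      ext k <;> simp
    · rintro rfl; exact hνbar
  · -- second part
    intro h0
    ext ν
    simp only [Set.mem_setOf_eq]
    constructor
    · intro hν
      rcases Nat.eq_zero_or_pos n with hn | hn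
      · refine ⟨0, ?_⟩
        subst hn
        ext k <;> exact absurd k.2 (by omega)
      · exact ⟨_, shape ν (key ν hν) ⟨0, hn⟩⟩
    · rintro ⟨c, rfl⟩ ν'
      have : dualg Gstar Θ p (νbar + ((fun _ => c), fun _ => -c)) =
          dualg Gstar Θ p νbar := by rw [dualg_shift, h0]; ring
      rw [this]; exact hνbar ν'
end
end

section
/- Let Θ ∈ ℝ^{n×n}, let G* : ℝ^{n×n} → ℝ be continuously differentiable and strictly convex, and let p ∈ ℝ^n × ℝ^n have strictly positive entries with ⟨p, (𝟙, −𝟙)⟩ = 0. Define g(p, ν) = ⟨p, ν⟩ − G*(𝒜ᵀν − Θ). Assume a maximizer ν̄ of g(p, ·) over ℝ^n × ℝ^n exists and every maximizer ν satisfies 𝒜(∇G*(𝒜ᵀν − Θ)) = p. Let ℝ^{2n} = ker(𝒜ᵀ) ⊕ range(𝒜) be the orthogonal decomposition. Then: (i) the orthogonal projection ν̄_R := P_{range(𝒜)}(ν̄) is a maximizer of g(p, ·) over range(𝒜) and over all of ℝ^n × ℝ^n, so that sup_{ν ∈ range(𝒜)} g(p, ν) = sup_{ν ∈ ℝ^{2n}}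 g(p, ν); (ii) ν̄_R is the unique maximizer of g(p, ·) within range(𝒜), and it does not depend on the choice of ν̄. -/
open Finset

noncomputable section

/-- The orthogonal projection of `ℝⁿ × ℝⁿ` onto `range(𝒜) = ker(𝒜ᵀ)^⊥`:
subtract the component along the kernel direction `(𝟙,−𝟙)`. -/
def projR {n : ℕ} (ν : (Fin n → ℝ) × (Fin n → ℝ)) : (Fin n → ℝ) × (Fin n → ℝ) :=
  (fun k => ν.1 k - ((∑ j, ν.1 j) - ∑ j, ν.2 j) / (2 * n),
   fun k => ν.2 k + ((∑ j, ν.1 j) - ∑ j, ν.2 j) / (2 * n))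

lemma ATmap_projR {n : ℕ} (ν : (Fin n → ℝ) × (Fin n → ℝ)) :
    ATmap (projR ν) = ATmap ν := by
  funext k l; simp only [ATmap, projR]; ring

lemma ATmap_sub_projR {n : ℕ} (ν : (Fin n → ℝ) × (Fin n → ℝ)) :
    ATmap (ν - projR ν) = 0 := by
  funext k l
  simp only [ATmap, projR, Prod.fst_sub, Prod.snd_sub, Pi.sub_apply, Pi.zero_apply]
  ring

lemma pdot_projR {n : ℕ} (p ν : (Fin n → ℝ) × (Fin n → ℝ))
    (hp0 : pdot p ((fun _ => 1), fun _ => -1) = 0) :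
    pdot p (projR ν) = pdot p ν := by
  have h : ∑ k, p.1 k = ∑ k, p.2 k := by
    simp only [pdot, vdot, mul_one, mul_neg_one, Finset.sum_neg_distrib] at hp0
    linarith [hp0]
  simp only [pdot, vdot, projR, mul_sub, mul_add, Finset.sum_sub_distrib,
    Finset.sum_add_distrib, ← Finset.sum_mul]
  rw [h]; ring

lemma mem_range_Amap {n : ℕ} (a b : Fin n → ℝ) (h : ∑ k, a k = ∑ k, b k) :
    (a, b) ∈ Set.range (Amap (n := n)) := by
  rcases Nat.eq_zero_or_pos n with hn | hn
  · subst hn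
    exact ⟨0, Prod.ext (funext fun k => k.elim0) (funext fun k => k.elim0)⟩
  · refine ⟨fun k l => a k / n + b l / n - (∑ j, a j) / (n * n), ?_⟩
    have hn' : (n : ℝ) ≠ 0 := Nat.cast_ne_zero.mpr hn.ne'
    refine Prod.ext (funext fun k => ?_) (funext fun l => ?_) <;>
    · simp only [Amap, Finset.sum_sub_distrib, Finset.sum_add_distrib,
        Finset.sum_const, card_univ, Fintype.card_fin, nsmul_eq_mul,
        ← Finset.sum_div]
      rw [h] <;> field_simp <;> ring

lemma sum_projR_fst_eq_snd {n : ℕ} (ν : (Fin n → ℝ) × (Fin n → ℝ)) :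
    ∑ k, (projR ν).1 k = ∑ k, (projR ν).2 k := by
  rcases Nat.eq_zero_or_pos n with hn | hn
  · subst hn; simp
  · have hn' : (n : ℝ) ≠ 0 := Nat.cast_ne_zero.mpr hn.ne'
    simp only [projR, Finset.sum_sub_distrib, Finset.sum_add_distrib,
      Finset.sum_const, card_univ, Fintype.card_fin, nsmul_eq_mul]
    field_simp
    ring

lemma projR_mem_range {n : ℕ} (ν : (Fin n → ℝ) × (Fin n → ℝ)) :
    projR ν ∈ Set.range (Amap (n := n)) :=
  mem_range_Amap _ _ (sum_projR_fst_eq_snd ν)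

lemma range_ker_zero {n : ℕ} (d : (Fin n → ℝ) × (Fin n → ℝ))
    (hd : d ∈ Set.range (Amap (n := n))) (h0 : ATmap d = 0) : d = 0 := by
  rcases Nat.eq_zero_or_pos n with hn | hn
  · subst hn; exact Prod.ext (funext fun k => k.elim0) (funext fun k => k.elim0)
  · obtain ⟨M, hM⟩ := hd
    have hsum : ∑ k, d.1 k = ∑ k, d.2 k := by
      rw [← hM]
      simpa [Amap] using Finset.sum_comm (s := Finset.univ) (t := Finset.univ) (f := fun k l => M k l)
    have h0' : ∀ k l, d.1 k + d.2 l = 0 := fun k l => by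
      have := congrFun (congrFun h0 k) l
      simpa [ATmap] using this
    set k0 : Fin n := ⟨0, hn⟩
    have h1 : ∀ k, d.1 k = -d.2 k0 := fun k => by linarith [h0' k k0]
    have h2 : ∀ l, d.2 l = -d.1 k0 := fun l => by linarith [h0' k0 l]
    have hs1 : ∑ k, d.1 k = n * (-d.2 k0) := by
      rw [Finset.sum_congr rfl fun k _ => h1 k]; simp [Finset.sum_const, card_univ]
    have hs2 : ∑ l, d.2 l = n * (-d.1 k0) := by
      rw [Finset.sum_congr rfl fun l _ => h2 l]; simp [Finset.sum_const, card_univ]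
    have hn' : (0 : ℝ) < n := Nat.cast_pos.mpr hn
    have hk0 : d.1 k0 = 0 ∧ d.2 k0 = 0 := by
      constructor <;> nlinarith [h0' k0 k0, hs1, hs2, hsum]
    refine Prod.ext (funext fun k => ?_) (funext fun l => ?_)
    · simpa [hk0.2] using h1 k
    · simpa [hk0.1] using h2 l

lemma vdot_avg {n : ℕ} (x y z : Fin n → ℝ) :
    vdot x (fun k => (y k + z k) / 2) = (vdot x y + vdot x z) / 2 := by
  simp only [vdot, ← Finset.sum_add_distrib]
  rw [Finset.sum_div]
  apply Finset.sum_congr rfl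
  intro k _
  ring

/-- Two maximizers of `dualg` over `range Amap` that lie in `range Amap` coincide. -/
lemma max_unique {n : ℕ} (Gstar : (Fin n → Fin n → ℝ) → ℝ) (Θ : Fin n → Fin n → ℝ)
    (hGconv : StrictConvexOn ℝ Set.univ Gstar)
    (p : (Fin n → ℝ) × (Fin n → ℝ))
    (u v : (Fin n → ℝ) × (Fin n → ℝ))
    (hu : u ∈ Set.range (Amap (n := n))) (hv : v ∈ Set.range (Amap (n := n)))
    (humax : ∀ ν, dualg Gstar Θ p ν ≤ dualg Gstar Θ p u)
    (hvmax : ∀ ν, dualg Gstar Θ p ν ≤ dualg Gstar Θ p v) : u = v := by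
  by_contra hne
  -- midpoint
  set m : (Fin n → ℝ) × (Fin n → ℝ) :=
    (fun k => (u.1 k + v.1 k) / 2, fun k => (u.2 k + v.2 k) / 2) with hm
  have hXY : ATmap u - Θ ≠ ATmap v - Θ := by
    intro h
    have h' : ATmap u = ATmap v := by
      funext k l
      have := congrFun (congrFun h k) l
      simpa using this
    apply hne
    obtain ⟨M, hM⟩ := hu
    obtain ⟨N, hN⟩ := hv
    have hdiff : u - v ∈ Set.range (Amap (n := n)) := by
      refine ⟨M - N, ?_⟩
      rw [← hM, ← hN]
      refine Prod.ext (funext fun k => ?_) (funext fun l => ?_) <;>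
        simp [Amap, Finset.sum_sub_distrib]
    have hker : ATmap (u - v) = 0 := by
      funext k l
      have := congrFun (congrFun h' k) l
      simp only [ATmap] at this
      simp only [ATmap, Prod.fst_sub, Prod.snd_sub, Pi.sub_apply, Pi.zero_apply]
      linarith
    have := range_ker_zero _ hdiff hker
    have h1 : u - v = 0 := this
    have := sub_eq_zero.mp h1
    exact this
  have hmAT : ATmap m - Θ = (1/2 : ℝ) • (ATmap u - Θ) + (1/2 : ℝ) • (ATmap v - Θ) := by
    funext k l
    simp only [ATmap, hm, Pi.add_apply, Pi.sub_apply, Pi.smul_apply, smul_eq_mul]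
    ring
  have hstrict := hGconv.2 (Set.mem_univ (ATmap u - Θ)) (Set.mem_univ (ATmap v - Θ)) hXY
    (by norm_num : (0:ℝ) < 1/2) (by norm_num : (0:ℝ) < 1/2) (by norm_num)
  have hpm : pdot p m = (pdot p u + pdot p v) / 2 := by
    simp only [pdot, hm, vdot_avg]; ring
  have heq : dualg Gstar Θ p u = dualg Gstar Θ p v :=
    le_antisymm (hvmax u) (humax v)
  have hgm : dualg Gstar Θ p u < dualg Gstar Θ p m := by
    simp only [dualg, hpm, hmAT]
    have : Gstar ((1/2 : ℝ) • (ATmap u - Θ) + (1/2 : ℝ) • (ATmap v - Θ)) <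
        (1/2 : ℝ) * Gstar (ATmap u - Θ) + (1/2 : ℝ) * Gstar (ATmap v - Θ) := by
      simpa [smul_eq_mul] using hstrict
    simp only [dualg] at heq
    linarith
  exact absurd (humax m) (not_le.mpr hgm)

lemma dualg_projR {n : ℕ} (Gstar : (Fin n → Fin n → ℝ) → ℝ) (Θ : Fin n → Fin n → ℝ)
    (p : (Fin n → ℝ) × (Fin n → ℝ))
    (hp0 : pdot p ((fun _ => 1), fun _ => -1) = 0)
    (ν : (Fin n → ℝ) × (Fin n → ℝ)) :
    dualg Gstar Θ p (projR ν) = dualg Gstar Θ p ν := by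
  simp only [dualg, ATmap_projR, pdot_projR p ν hp0]

theorem stmt8' (n : ℕ) (Θ : Fin n → Fin n → ℝ)
    (Gstar : (Fin n → Fin n → ℝ) → ℝ)
    (hGconv : StrictConvexOn ℝ Set.univ Gstar)
    (p : (Fin n → ℝ) × (Fin n → ℝ))
    (hp0 : pdot p ((fun _ => 1), fun _ => -1) = 0)
    (νbar : (Fin n → ℝ) × (Fin n → ℝ))
    (hνbar : ∀ ν, dualg Gstar Θ p ν ≤ dualg Gstar Θ p νbar) :
    (projR νbar ∈ Set.range (Amap (n := n))) ∧
    (ATmap (νbar - projR νbar) = 0) ∧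
    (∀ ν, dualg Gstar Θ p ν ≤ dualg Gstar Θ p (projR νbar)) ∧
    (sSup (dualg Gstar Θ p '' Set.range (Amap (n := n))) =
      sSup (Set.range (dualg Gstar Θ p))) ∧
    (∀ ν' ∈ Set.range (Amap (n := n)),
      (∀ ν'' ∈ Set.range (Amap (n := n)), dualg Gstar Θ p ν'' ≤ dualg Gstar Θ p ν') →
      ν' = projR νbar) ∧
    (∀ νbar' : (Fin n → ℝ) × (Fin n → ℝ),
      (∀ ν, dualg Gstar Θ p ν ≤ dualg Gstar Θ p νbar') → projR νbar' = projR νbar) := by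
  have hmemR : projR νbar ∈ Set.range (Amap (n := n)) := projR_mem_range νbar
  have hmaxR : ∀ ν, dualg Gstar Θ p ν ≤ dualg Gstar Θ p (projR νbar) := fun ν => by
    rw [dualg_projR Gstar Θ p hp0]; exact hνbar ν
  refine ⟨hmemR, ATmap_sub_projR νbar, hmaxR, ?_, ?_, ?_⟩
  · -- sSup equality
    have hG1 : IsGreatest (dualg Gstar Θ p '' Set.range (Amap (n := n)))
        (dualg Gstar Θ p (projR νbar)) :=
      ⟨⟨projR νbar, hmemR, rfl⟩, by rintro x ⟨ν, -, rfl⟩; exact hmaxR ν⟩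
    have hG2 : IsGreatest (Set.range (dualg Gstar Θ p)) (dualg Gstar Θ p (projR νbar)) :=
      ⟨⟨projR νbar, rfl⟩, by rintro x ⟨ν, rfl⟩; exact hmaxR ν⟩
    rw [hG1.csSup_eq, hG2.csSup_eq]
  · -- uniqueness within range
    intro ν' hν' hν'max
    have hglobal : ∀ ν, dualg Gstar Θ p ν ≤ dualg Gstar Θ p ν' := fun ν => by
      rw [← dualg_projR Gstar Θ p hp0 ν]
      exact hν'max _ (projR_mem_range ν)
    exact max_unique Gstar Θ hGconv p ν' (projR νbar) hν' hmemR hglobal hmaxR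
  · -- independence of choice
    intro νbar' hνbar'
    have hmaxR' : ∀ ν, dualg Gstar Θ p ν ≤ dualg Gstar Θ p (projR νbar') := fun ν => by
      rw [dualg_projR Gstar Θ p hp0]; exact hνbar' ν
    exact max_unique Gstar Θ hGconv p (projR νbar') (projR νbar)
      (projR_mem_range νbar') hmemR hmaxR' hmaxR

theorem stmt8 (n : ℕ) (Θ : Fin n → Fin n → ℝ)
    (Gstar : (Fin n → Fin n → ℝ) → ℝ)
    -- `G*` is continuously differentiable with gradient `Gd` and strictly convex:
    (Gd : (Fin n → Fin n → ℝ) → (Fin n → Fin n → ℝ))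
    (hGdiff : ∀ X, ∃ L : (Fin n → Fin n → ℝ) →L[ℝ] ℝ,
      HasFDerivAt Gstar L X ∧ ∀ Y, L Y = mdot (Gd X) Y)
    (hGcont : Continuous Gd)
    (hGconv : StrictConvexOn ℝ Set.univ Gstar)
    -- `p` has strictly positive entries and ⟨p,(𝟙,−𝟙)⟩ = 0:
    (p : (Fin n → ℝ) × (Fin n → ℝ)) (hp1 : ∀ k, 0 < p.1 k) (hp2 : ∀ k, 0 < p.2 k)
    (hp0 : pdot p ((fun _ => 1), fun _ => -1) = 0)
    -- a maximizer ν̄ of g(p,·) exists: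
    (νbar : (Fin n → ℝ) × (Fin n → ℝ))
    (hνbar : ∀ ν, dualg Gstar Θ p ν ≤ dualg Gstar Θ p νbar)
    -- every maximizer ν satisfies 𝒜(∇G*(𝒜ᵀν − Θ)) = p:
    (hmarg : ∀ ν, (∀ ν', dualg Gstar Θ p ν' ≤ dualg Gstar Θ p ν) →
      Amap (Gd (ATmap ν - Θ)) = p) :
    -- ν̄_R = P_{range(𝒜)}(ν̄): it lies in range(𝒜) and ν̄ − ν̄_R ∈ ker(𝒜ᵀ):
    (projR νbar ∈ Set.range (Amap (n := n))) ∧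
    (ATmap (νbar - projR νbar) = 0) ∧
    -- (i) ν̄_R maximizes g(p,·) over all of ℝⁿ × ℝⁿ (hence over range(𝒜)):
    (∀ ν, dualg Gstar Θ p ν ≤ dualg Gstar Θ p (projR νbar)) ∧
    (sSup (dualg Gstar Θ p '' Set.range (Amap (n := n))) =
      sSup (Set.range (dualg Gstar Θ p))) ∧
    -- (ii) ν̄_R is the unique maximizer within range(𝒜):
    (∀ ν' ∈ Set.range (Amap (n := n)),
      (∀ ν'' ∈ Set.range (Amap (n := n)), dualg Gstar Θ p ν'' ≤ dualg Gstar Θ p ν') →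
      ν' = projR νbar) ∧
    -- and it does not depend on the choice of the maximizer ν̄:
    (∀ νbar' : (Fin n → ℝ) × (Fin n → ℝ),
      (∀ ν, dualg Gstar Θ p ν ≤ dualg Gstar Θ p νbar') → projR νbar' = projR νbar) := by
  exact stmt8' n Θ Gstar hGconv p hp0 νbar hνbar
end
end

section
/- Let c = (1/n)𝟙 ∈ ℝ^n and define the lifting map L̃_p(x) = (p · e^x)/⟨p, e^x⟩ for p ∈ S and x ∈ ℝ^n, where multiplication, division and exponentiation are componentwise. Let V ∈ ℝ^n satisfy ⟨𝟙, V⟩ = 0, let W := L̃_c(V) ∈ S, and let α ≥ 0, h > 0 and G ∈ ℝ^n. Then L̃_c((1 + α)V − hG) = (W^{1+α} · e^{−hG}) / ⟨W^{1+α}, e^{−hG}⟩, where W^{1+α} denotes componentwise powers. (This identity shows that the multiplicative update W^{(k+1)}_i = ((W_i^{(k)})^{1+α} · e^{−h∇_i E_τ}) / ⟨(W_i^{(k)})^{1+α}, e^{−h∇_i E_τ}⟩ is the lift of the explicit Euler step V^{(k+1)} = (1+α)V^{(k)} − h∇E_τ on the tangent space, i.e., a geometric Euler step for the gradient flow of f_{τ,α}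 = E_τ + (α/h)H.) -/
open Finset

noncomputable section

/-- The lifting map `L̃_p(x) = (p · eˣ)/⟨p, eˣ⟩` (componentwise operations). -/
def liftmap {n : ℕ} (p x : Fin n → ℝ) : Fin n → ℝ :=
  fun k => p k * Real.exp (x k) / ∑ j, p j * Real.exp (x j)

lemma liftmap_const {n : ℕ} (hn : 0 < n) (x : Fin n → ℝ) (k : Fin n) :
    liftmap (fun _ => 1 / (n : ℝ)) x k = Real.exp (x k) / ∑ j, Real.exp (x j) := by
  have hn' : (n : ℝ) ≠ 0 := Nat.cast_ne_zero.mpr hn.ne'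
  simp only [liftmap, ← Finset.mul_sum]
  rw [mul_div_mul_left _ _ (by positivity)]

theorem stmt9 (n : ℕ) (V G : Fin n → ℝ) (α h : ℝ) (hα : 0 ≤ α) (hh : 0 < h)
    -- `V ∈ T`, i.e. `⟨𝟙, V⟩ = 0`:
    (hV : ∑ k, V k = 0) :
    -- `L̃_c((1+α)V − hG) = (W^{1+α}·e^{−hG})/⟨W^{1+α}, e^{−hG}⟩` where
    -- `c = (1/n)𝟙` and `W = L̃_c(V)`:
    liftmap (fun _ => 1 / (n : ℝ)) (fun k => (1 + α) * V k - h * G k) =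
      fun k =>
        (liftmap (fun _ => 1 / (n : ℝ)) V k) ^ ((1 : ℝ) + α) * Real.exp (-(h * G k)) /
          ∑ j, (liftmap (fun _ => 1 / (n : ℝ)) V j) ^ ((1 : ℝ) + α) * Real.exp (-(h * G j)) := by
  rcases Nat.eq_zero_or_pos n with rfl | hn
  · funext k; exact absurd k.2 (by simp)
  funext k
  set S : ℝ := ∑ j, Real.exp (V j) with hS
  have hSpos : 0 < S := Finset.sum_pos (fun j _ => Real.exp_pos _) ⟨k, Finset.mem_univ k⟩
  have hW : ∀ j : Fin n, (liftmap (fun _ => 1 / (n : ℝ)) V j) ^ ((1 : ℝ) + α) =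
      Real.exp ((1 + α) * V j) / S ^ ((1 : ℝ) + α) := by
    intro j
    rw [liftmap_const hn, Real.div_rpow (Real.exp_pos _).le hSpos.le,
      ← Real.exp_log (Real.exp_pos (V j)), ← Real.exp_mul, Real.log_exp, mul_comm]
  have hterm : ∀ j : Fin n,
      (liftmap (fun _ => 1 / (n : ℝ)) V j) ^ ((1 : ℝ) + α) * Real.exp (-(h * G j)) =
      Real.exp ((1 + α) * V j - h * G j) / S ^ ((1 : ℝ) + α) := by
    intro j
    rw [hW j, div_mul_eq_mul_div, ← Real.exp_add]
    ring_nf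
  simp only [hterm]
  rw [liftmap_const hn]
  rw [← Finset.sum_div]
  have hSa : (0 : ℝ) < S ^ ((1 : ℝ) + α) := Real.rpow_pos_of_pos hSpos _
  rw [div_div_div_comm, div_self hSa.ne', div_one]
end
end
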